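/- Let APX be a maximal triangle-free 2-matching of G, i.e., one to which no single edge can be added while remaining a triangle-free 2-matching. Then |APX| ≥ |OPT|/2 where OPT is a maximum-cardinality triangle-free 2-matching of G. -/
import Mathlib


open Finset symmDiff

variable {V : Type*}

/-- Neighbors of `u` via edges in `S`. -/
def nbrs [Fintype V] [DecidableEq V] (S : Finset (Sym2 V)) (u : V) : Finset V :=
  Finset.univ.filter (fun v => s(u, v) ∈ S)

/-- `M` is a (simple) 2-matching of `G`: a set of edges of `G` giving each vertex degree ≤ 2. -/
def Is2Matching [Fintype V] [DecidableEq V] (G : SimpleGraph V) [DecidableRel G.Adj]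
    (M : Finset (Sym2 V)) : Prop :=
  M ⊆ G.edgeFinset ∧ ∀ u : V, (nbrs M u).card ≤ 2

/-- The edge set `S` contains a triangle. -/
def HasTriangle [DecidableEq V] (S : Finset (Sym2 V)) : Prop :=
  ∃ a b c : V, a ≠ b ∧ b ≠ c ∧ a ≠ c ∧ s(a, b) ∈ S ∧ s(b, c) ∈ S ∧ s(a, c) ∈ S

/-- A triangle-free 2-matching. -/
def IsTF2M [Fintype V] [DecidableEq V] (G : SimpleGraph V) [DecidableRel G.Adj]
    (M : Finset (Sym2 V)) : Prop :=
  Is2Matching G M ∧ ¬ HasTriangle M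

/-- The list of edges of a trail given by its vertex sequence. -/
def trailEdges (vs : List V) : List (Sym2 V) :=
  List.zipWith (fun a b => s(a, b)) vs vs.tail

/-- A trail: at least one edge, consecutive vertices distinct, all edges distinct. -/
def IsTrail [DecidableEq V] (vs : List V) : Prop :=
  2 ≤ vs.length ∧ vs.Chain' (· ≠ ·) ∧ (trailEdges vs).Nodup

/-- Edge set of a trail. -/
def edgesOf [DecidableEq V] (vs : List V) : Finset (Sym2 V) :=
  (trailEdges vs).toFinset

/-- An alternating trail w.r.t. `M`: edges alternate between `M` and its complement. -/
def IsAlternating [DecidableEq V] (M : Finset (Sym2 V)) (vs : List V) : Prop :=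
  IsTrail vs ∧ (trailEdges vs).Chain' (fun e f => e ∈ M ↔ f ∉ M)

/-- An augmenting trail for `M`: alternating, and `M ∆ P` is a triangle-free 2-matching
of size `|M| + 1`. -/
def IsAugmenting [Fintype V] [DecidableEq V] (G : SimpleGraph V) [DecidableRel G.Adj]
    (M : Finset (Sym2 V)) (vs : List V) : Prop :=
  IsAlternating M vs ∧ IsTF2M G (M ∆ edgesOf vs) ∧ (M ∆ edgesOf vs).card = M.card + 1

/-- The first edge of the trail `vs` belongs to `S`. -/
def FirstEdgeIn [DecidableEq V] (vs : List V) (S : Finset (Sym2 V)) : Prop :=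
  ∃ e ∈ S, (trailEdges vs).head? = some e

/-- The last edge of the trail `vs` belongs to `S`. -/
def LastEdgeIn [DecidableEq V] (vs : List V) (S : Finset (Sym2 V)) : Prop :=
  ∃ e ∈ S, (trailEdges vs).getLast? = some e

/-- `u` is deficient w.r.t. `E'`. -/
def Deficient [Fintype V] [DecidableEq V] (APX OPT E' : Finset (Sym2 V)) (u : V) : Prop :=
  (nbrs (APX \ E') u).card < (nbrs (OPT \ E') u).card

/-- `a b c` form a triangle in the edge set `S`. -/
def TriIn [DecidableEq V] (S : Finset (Sym2 V)) (a b c : V) : Prop :=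
  a ≠ b ∧ b ≠ c ∧ a ≠ c ∧ s(a, b) ∈ S ∧ s(b, c) ∈ S ∧ s(a, c) ∈ S

lemma mem_nbrs [Fintype V] [DecidableEq V] {S : Finset (Sym2 V)} {u v : V} :
    v ∈ nbrs S u ↔ s(u, v) ∈ S := by simp [nbrs]

lemma tri_case [DecidableEq V] {APX : Finset (Sym2 V)} {e : Sym2 V} {a b c : V}
    (hab : a ≠ b) (hbc : b ≠ c) (hac : a ≠ c)
    (h1 : s(a, b) = e) (h2 : s(b, c) ∈ insert e APX) (h3 : s(a, c) ∈ insert e APX) :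
    ∃ f1 f2 : Sym2 V, f1 ∈ APX ∧ f2 ∈ APX ∧ f1 ≠ f2 ∧
      (∃ u, u ∈ e ∧ u ∈ f1) ∧ (∃ u, u ∈ e ∧ u ∈ f2) := by
  have hf1 : s(b, c) ∈ APX := by
    rcases Finset.mem_insert.mp h2 with h | h
    · rw [← h1, Sym2.eq_iff] at h; tauto
    · exact h
  have hf2 : s(a, c) ∈ APX := by
    rcases Finset.mem_insert.mp h3 with h | h
    · rw [← h1, Sym2.eq_iff] at h; tauto
    · exact h
  refine ⟨s(b, c), s(a, c), hf1, hf2, ?_, ⟨b, ?_, ?_⟩, ⟨a, ?_, ?_⟩⟩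
  · intro h; rw [Sym2.eq_iff] at h; tauto
  · rw [← h1]; simp
  · simp
  · rw [← h1]; simp
  · simp

lemma block [Fintype V] [DecidableEq V] (G : SimpleGraph V) [DecidableRel G.Adj]
    (APX : Finset (Sym2 V)) (hAPX : IsTF2M G APX)
    (hmaximal : ∀ e ∈ G.edgeFinset, e ∉ APX → ¬ IsTF2M G (insert e APX))
    (e : Sym2 V) (he : e ∈ G.edgeFinset) (heA : e ∉ APX) :
    ∃ f1 f2 : Sym2 V, f1 ∈ APX ∧ f2 ∈ APX ∧ f1 ≠ f2 ∧
      (∃ u, u ∈ e ∧ u ∈ f1) ∧ (∃ u, u ∈ e ∧ u ∈ f2) := by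
  classical
  have hni := hmaximal e he heA
  by_cases ht : HasTriangle (insert e APX)
  · obtain ⟨a, b, c, hab, hbc, hac, h1, h2, h3⟩ := ht
    rcases Finset.mem_insert.mp h1 with h | h
    · exact tri_case hab hbc hac h h2 h3
    · rcases Finset.mem_insert.mp h2 with h' | h'
      · refine tri_case hbc (Ne.symm hac) (Ne.symm hab) h' ?_ ?_
        · rw [Sym2.eq_swap]; exact h3
        · rw [Sym2.eq_swap]; exact Finset.mem_insert_of_mem h
      · rcases Finset.mem_insert.mp h3 with h'' | h''
        · refine tri_case hac (Ne.symm hbc) hab h'' ?_ ?_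
          · rw [Sym2.eq_swap]; exact Finset.mem_insert_of_mem h'
          · exact Finset.mem_insert_of_mem h
        · exact absurd ⟨a, b, c, hab, hbc, hac, h, h', h''⟩ hAPX.2
  · -- degree violation
    have hsub : insert e APX ⊆ G.edgeFinset := Finset.insert_subset he hAPX.1.1
    have hdeg : ∃ u : V, 2 < (nbrs (insert e APX) u).card := by
      by_contra h
      push_neg at h
      exact hni ⟨⟨hsub, h⟩, ht⟩
    obtain ⟨u, hu⟩ := hdeg
    have hnotsub : ¬ nbrs (insert e APX) u ⊆ nbrs APX u := by
      intro h
      have := Finset.card_le_card h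
      have h2 := hAPX.1.2 u
      omega
    obtain ⟨v, hv1, hv2⟩ := Finset.not_subset.mp hnotsub
    have hev : s(u, v) = e := by
      rcases Finset.mem_insert.mp (mem_nbrs.mp hv1) with h | h
      · exact h
      · exact absurd (mem_nbrs.mpr h) hv2
    have hsub2 : (nbrs (insert e APX) u).erase v ⊆ nbrs APX u := by
      intro w hw
      obtain ⟨hwv, hw⟩ := Finset.mem_erase.mp hw
      rcases Finset.mem_insert.mp (mem_nbrs.mp hw) with h | h
      · rw [← hev, Sym2.eq_iff] at h
        rcases h with ⟨-, rfl⟩ | ⟨h1, h2⟩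
        · exact absurd rfl hwv
        · exact absurd (h2.trans h1) hwv
      · exact mem_nbrs.mpr h
    have hcard : 1 < (nbrs APX u).card := by
      have h1 := Finset.card_le_card hsub2
      have h2 := Finset.card_erase_of_mem hv1
      omega
    obtain ⟨a, ha, b, hb, hab⟩ := Finset.one_lt_card.mp hcard
    have hue : u ∈ e := by rw [← hev]; simp
    refine ⟨s(u, a), s(u, b), mem_nbrs.mp ha, mem_nbrs.mp hb, ?_, ⟨u, hue, by simp⟩,
      ⟨u, hue, by simp⟩⟩
    intro h
    rw [Sym2.eq_iff] at h
    rcases h with ⟨-, rfl⟩ | ⟨rfl, h2⟩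
    · exact hab rfl
    · exact hab h2

lemma filter_erase_subset_image [Fintype V] [DecidableEq V] (OPT : Finset (Sym2 V)) (x y : V) :
    (OPT.filter (fun e => x ∈ e)).erase s(x, y) ⊆
      ((nbrs OPT x).erase y).image (fun v => s(x, v)) := by
  intro e he
  rw [Finset.mem_erase, Finset.mem_filter] at he
  obtain ⟨hne, heO, hx⟩ := he
  obtain ⟨v, rfl⟩ : ∃ v, e = s(x, v) := ⟨Sym2.Mem.other' hx, (Sym2.other_spec' hx).symm⟩
  refine Finset.mem_image.mpr ⟨v, Finset.mem_erase.mpr ⟨?_, mem_nbrs.mpr heO⟩, rfl⟩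
  rintro rfl; exact hne rfl

lemma filter_subset_image [Fintype V] [DecidableEq V] (OPT : Finset (Sym2 V)) (x : V) :
    (OPT.filter (fun e => x ∈ e)) ⊆ (nbrs OPT x).image (fun v => s(x, v)) := by
  intro e he
  rw [Finset.mem_filter] at he
  obtain ⟨heO, hx⟩ := he
  obtain ⟨v, rfl⟩ : ∃ v, e = s(x, v) := ⟨Sym2.Mem.other' hx, (Sym2.other_spec' hx).symm⟩
  exact Finset.mem_image.mpr ⟨v, mem_nbrs.mpr heO, rfl⟩


theorem stmt_12 [Fintype V] [DecidableEq V] (G : SimpleGraph V) [DecidableRel G.Adj]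
    (APX OPT : Finset (Sym2 V))
    (hAPX : IsTF2M G APX)
    (hmaximal : ∀ e ∈ G.edgeFinset, e ∉ APX → ¬ IsTF2M G (insert e APX))
    (hOPT : IsTF2M G OPT)
    (hmax : ∀ M : Finset (Sym2 V), IsTF2M G M → M.card ≤ OPT.card) :
    OPT.card ≤ 2 * APX.card := by
  classical
  have hblock : ∀ e : Sym2 V, ∃ p : Sym2 V × Sym2 V, e ∈ OPT \ APX →
      p.1 ∈ APX ∧ p.2 ∈ APX ∧ p.1 ≠ p.2 ∧
        (∃ u, u ∈ e ∧ u ∈ p.1) ∧ (∃ u, u ∈ e ∧ u ∈ p.2) := by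
    intro e
    by_cases h : e ∈ OPT \ APX
    · obtain ⟨f1, f2, hh⟩ := block G APX hAPX hmaximal e
        (hOPT.1.1 (Finset.mem_sdiff.mp h).1) (Finset.mem_sdiff.mp h).2
      exact ⟨(f1, f2), fun _ => hh⟩
    · exact ⟨(e, e), fun he => absurd he h⟩
  choose F hF using hblock
  set c : Sym2 V → Sym2 V → ℕ := fun e f =>
    if e ∈ APX then (if f = e then 2 else 0)
    else ((if f = (F e).1 then 1 else 0) + (if f = (F e).2 then 1 else 0)) with hc
  have rowsum : ∀ e ∈ OPT, ∑ f ∈ APX, c e f = 2 := by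
    intro e he
    by_cases hA : e ∈ APX
    · simp [hc, hA, Finset.sum_ite_eq']
    · have h := hF e (Finset.mem_sdiff.mpr ⟨he, hA⟩)
      simp only [hc, hA, if_false]
      rw [Finset.sum_add_distrib, Finset.sum_ite_eq' APX, Finset.sum_ite_eq' APX,
        if_pos h.1, if_pos h.2.1]
  have colsum : ∀ f ∈ APX, ∑ e ∈ OPT, c e f ≤ 4 := by
    intro f hf
    revert hf
    induction f using Sym2.ind with
    | _ x y =>
    intro hf
    -- each individual term for e ≠ s(x,y) is ≤ 1
    have hterm : ∀ e ∈ OPT, e ≠ s(x, y) → c e s(x, y) ≤ 1 := by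
      intro e he hne
      by_cases hA : e ∈ APX
      · simp only [hc, hA, if_true]
        rw [if_neg (fun h => hne h.symm)]
        exact Nat.zero_le _
      · have h := hF e (Finset.mem_sdiff.mpr ⟨he, hA⟩)
        simp only [hc, hA, if_false]
        by_cases h1 : s(x, y) = (F e).1 <;> by_cases h2 : s(x, y) = (F e).2
        · exact absurd (h1.symm.trans h2) h.2.2.1
        · rw [if_pos h1, if_neg h2]
        · rw [if_neg h1, if_pos h2]
        · rw [if_neg h1, if_neg h2]
          exact Nat.zero_le _
    set S1 : Finset (Sym2 V) := OPT.filter (fun e => x ∈ e) with hS1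
    set S2 : Finset (Sym2 V) := OPT.filter (fun e => y ∈ e) with hS2
    have hsum_eq : ∑ e ∈ OPT, c e s(x, y) = ∑ e ∈ S1 ∪ S2, c e s(x, y) := by
      refine (Finset.sum_subset ?_ ?_).symm
      · exact Finset.union_subset (Finset.filter_subset _ _) (Finset.filter_subset _ _)
      · intro e he hnot
        rw [Finset.mem_union, hS1, hS2, Finset.mem_filter, Finset.mem_filter] at hnot
        push_neg at hnot
        have hx : x ∉ e := hnot.1 he
        have hy : y ∉ e := hnot.2 he
        have hshare : ∀ g : Sym2 V, (∃ u, u ∈ e ∧ u ∈ g) → s(x, y) ≠ g := by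
          rintro g ⟨u, hu, hug⟩ rfl
          rcases Sym2.mem_iff.mp hug with rfl | rfl
          · exact hx hu
          · exact hy hu
        by_cases hA : e ∈ APX
        · simp only [hc, hA, if_true]
          rw [if_neg]
          rintro rfl
          exact hx (Sym2.mem_mk_left x y)
        · have h := hF e (Finset.mem_sdiff.mpr ⟨he, hA⟩)
          simp only [hc, hA, if_false]
          rw [if_neg (hshare _ h.2.2.2.1), if_neg (hshare _ h.2.2.2.2)]
          rfl
    rw [hsum_eq]
    have hnx : (nbrs OPT x).card ≤ 2 := hOPT.1.2 x
    have hny : (nbrs OPT y).card ≤ 2 := hOPT.1.2 y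
    by_cases hfO : s(x, y) ∈ OPT
    · -- f ∈ S1 ∪ S2
      have hfS : s(x, y) ∈ S1 ∪ S2 := by
        rw [Finset.mem_union, hS1, Finset.mem_filter]
        exact Or.inl ⟨hfO, Sym2.mem_mk_left x y⟩
      rw [← Finset.insert_erase hfS, Finset.sum_insert (Finset.notMem_erase _ _)]
      have hcf : c s(x, y) s(x, y) = 2 := by simp [hc, hf]
      have hbound : ∑ e ∈ (S1 ∪ S2).erase s(x, y), c e s(x, y)
          ≤ ((S1 ∪ S2).erase s(x, y)).card * 1 := by
        apply Finset.sum_le_card_nsmul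
        intro e he
        rw [Finset.mem_erase] at he
        exact hterm e (Finset.union_subset (Finset.filter_subset _ _)
          (Finset.filter_subset _ _) he.2) he.1
      have hc1 : ((S1 ∪ S2).erase s(x, y)).card ≤ 2 := by
        rw [Finset.erase_union_distrib]
        have e1 : (S1.erase s(x, y)).card ≤ ((nbrs OPT x).erase y).card := by
          calc (S1.erase s(x, y)).card
              ≤ (((nbrs OPT x).erase y).image (fun v => s(x, v))).card :=
                Finset.card_le_card (filter_erase_subset_image OPT x y)
            _ ≤ ((nbrs OPT x).erase y).card := Finset.card_image_le
        have e2 : (S2.erase s(x, y)).card ≤ ((nbrs OPT y).erase x).card := by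
          have : S2.erase s(x, y) = S2.erase s(y, x) := by rw [Sym2.eq_swap]
          rw [this]
          calc (S2.erase s(y, x)).card
              ≤ (((nbrs OPT y).erase x).image (fun v => s(y, v))).card :=
                Finset.card_le_card (filter_erase_subset_image OPT y x)
            _ ≤ ((nbrs OPT y).erase x).card := Finset.card_image_le
        have hy1 : y ∈ nbrs OPT x := mem_nbrs.mpr hfO
        have hx1 : x ∈ nbrs OPT y := mem_nbrs.mpr (by rwa [Sym2.eq_swap])
        have c1 := Finset.card_erase_of_mem hy1
        have c2 := Finset.card_erase_of_mem hx1
        have := Finset.card_union_le (S1.erase s(x, y)) (S2.erase s(x, y))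
        omega
      omega
    · have hbound : ∑ e ∈ S1 ∪ S2, c e s(x, y) ≤ (S1 ∪ S2).card * 1 := by
        apply Finset.sum_le_card_nsmul
        intro e he
        have heO : e ∈ OPT := Finset.union_subset (Finset.filter_subset _ _)
          (Finset.filter_subset _ _) he
        exact hterm e heO (fun h => hfO (h ▸ heO))
      have e1 : S1.card ≤ (nbrs OPT x).card := by
        calc S1.card ≤ ((nbrs OPT x).image (fun v => s(x, v))).card :=
              Finset.card_le_card (filter_subset_image OPT x)
          _ ≤ (nbrs OPT x).card := Finset.card_image_le
      have e2 : S2.card ≤ (nbrs OPT y).card := by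
        calc S2.card ≤ ((nbrs OPT y).image (fun v => s(y, v))).card := by
              apply Finset.card_le_card
              intro e he
              rw [hS2, Finset.mem_filter] at he
              obtain ⟨heO, hy'⟩ := he
              obtain ⟨v, rfl⟩ : ∃ v, e = s(y, v) :=
                ⟨Sym2.Mem.other' hy', (Sym2.other_spec' hy').symm⟩
              exact Finset.mem_image.mpr ⟨v, mem_nbrs.mpr heO, rfl⟩
          _ ≤ (nbrs OPT y).card := Finset.card_image_le
      have := Finset.card_union_le S1 S2
      omega
  have key : 2 * OPT.card ≤ 4 * APX.card := by
    calc 2 * OPT.card = ∑ _e ∈ OPT, 2 := by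
          rw [Finset.sum_const, smul_eq_mul, mul_comm]
      _ = ∑ e ∈ OPT, ∑ f ∈ APX, c e f := Finset.sum_congr rfl (fun e he => (rowsum e he).symm)
      _ = ∑ f ∈ APX, ∑ e ∈ OPT, c e f := Finset.sum_comm
      _ ≤ ∑ _f ∈ APX, 4 := Finset.sum_le_sum colsum
      _ = 4 * APX.card := by rw [Finset.sum_const, smul_eq_mul, mul_comm]
  omega
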